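/- Let n ≥ 1 and let a = (a_1,…,a_n) ∈ ℝⁿ with 0 < a_1 ≤ a_2 ≤ ⋯ ≤ a_n. Then for all integers 1 ≤ k ≤ n: max_{1≤i≤n} σ_{k−1;i}(a) a_i = σ_{k−1;n}(a) a_n and min_{1≤i≤n} σ_{k−1;i}(a) a_i = σ_{k−1;1}(a) a_1; that is, H_k(a) = σ_{k−1;n}(a) a_n / σ_k(a) and h_k(a) = σ_{k−1;1}(a) a_1 / σ_k(a). Moreover, for 1 ≤ m ≤ k ≤ n, σ_{m−1;n}(a) a_n / σ_m(a) ≤ σ_{k−1;n}(a) a_n / σ_k(a), i.e. H_m(a) ≤ H_k(a). -/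

import Mathlib

open scoped BigOperators
open Filter MeasureTheory Set

noncomputable section

/-- Euclidean `n`-space `ℝⁿ`. -/
abbrev En (n : ℕ) : Type := EuclideanSpace ℝ (Fin n)

/-- `σ_k(a)`: the `k`-th elementary symmetric polynomial of `a : Fin n → ℝ`. -/
def esym (n k : ℕ) (a : Fin n → ℝ) : ℝ :=
  ∑ t ∈ Finset.powersetCard k (Finset.univ : Finset (Fin n)), ∏ i ∈ t, a i

/-- `σ_{k;i}(a) := σ_k(a)|_{a_i = 0}`. -/
def esymDel (n k : ℕ) (a : Fin n → ℝ) (i : Fin n) : ℝ :=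
  esym n k (Function.update a i 0)

/-- `H_k(a) = max_{1 ≤ i ≤ n} σ_{k-1;i}(a) a_i / σ_k(a)`. -/
def Hfun (n k : ℕ) (a : Fin n → ℝ) : ℝ :=
  ⨆ i : Fin n, esymDel n (k - 1) a i * a i / esym n k a

/-- `h_l(a) = min_{1 ≤ i ≤ n} σ_{l-1;i}(a) a_i / σ_l(a)`, with `h_0 = 0`. -/
def hfun (n l : ℕ) (a : Fin n → ℝ) : ℝ :=
  if l = 0 then 0 else ⨅ i : Fin n, esymDel n (l - 1) a i * a i / esym n l a

/-- The Hessian matrix `D²u(x)` of a function `u : ℝⁿ → ℝ`. -/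
def hess {n : ℕ} (u : En n → ℝ) (x : En n) : Matrix (Fin n) (Fin n) ℝ :=
  Matrix.of fun i j =>
    fderiv ℝ (fun y => fderiv ℝ u y (EuclideanSpace.single j 1)) x (EuclideanSpace.single i 1)

/-- `σ_k(λ(M))`: the `k`-th elementary symmetric function of the eigenvalues of `M`,
expressed via the coefficients of the characteristic polynomial. -/
def sigmaEig {n : ℕ} (k : ℕ) (M : Matrix (Fin n) (Fin n) ℝ) : ℝ :=
  (-1 : ℝ) ^ k * M.charpoly.coeff (n - k)

/-- The Hessian quotient operator `S_{k,l}(M) = σ_k(λ(M))/σ_l(λ(M))`. -/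
def Skl {n : ℕ} (k l : ℕ) (M : Matrix (Fin n) (Fin n) ℝ) : ℝ :=
  sigmaEig k M / sigmaEig l M

/-- The Garding cone `Γ_k = {λ : σ_j(λ) > 0, 1 ≤ j ≤ k}`. -/
def GammaCone (n k : ℕ) : Set (Fin n → ℝ) :=
  {lam | ∀ j : ℕ, 1 ≤ j → j ≤ k → 0 < esym n j lam}

/-- `ψ` is `k`-convex at `x`: the (symmetric) Hessian has eigenvalue vector in `closure Γ_k`. -/
def KConvexAt (n k : ℕ) (ψ : En n → ℝ) (x : En n) : Prop :=
  ∃ hsym : (hess ψ x).IsHermitian, hsym.eigenvalues ∈ closure (GammaCone n k)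

/-- Viscosity subsolution of `S_{k,l}(D²u) = 1` on `Ω`. -/
def ViscSubOn (n k l : ℕ) (Ω : Set (En n)) (u : En n → ℝ) : Prop :=
  UpperSemicontinuousOn u Ω ∧
  ∀ ψ : En n → ℝ, ContDiffOn ℝ 2 ψ Ω → (∀ x ∈ Ω, KConvexAt n k ψ x) →
    ∀ x₀ ∈ Ω, ψ x₀ = u x₀ → (∀ x ∈ Ω, u x ≤ ψ x) → 1 ≤ Skl k l (hess ψ x₀)

/-- Viscosity supersolution of `S_{k,l}(D²u) = 1` on `Ω`. -/
def ViscSupOn (n k l : ℕ) (Ω : Set (En n)) (u : En n → ℝ) : Prop :=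
  LowerSemicontinuousOn u Ω ∧
  ∀ ψ : En n → ℝ, ContDiffOn ℝ 2 ψ Ω → (∀ x ∈ Ω, KConvexAt n k ψ x) →
    ∀ x₀ ∈ Ω, ψ x₀ = u x₀ → (∀ x ∈ Ω, ψ x ≤ u x) → Skl k l (hess ψ x₀) ≤ 1

/-- Viscosity solution of the exterior Dirichlet problem
`S_{k,l}(D²u) = 1` in `ℝⁿ ∖ D̄`, `u = φ` on `∂D`, `u ∈ C⁰(ℝⁿ ∖ D)`. -/
def ExtViscSolution (n k l : ℕ) (D : Set (En n)) (φ u : En n → ℝ) : Prop :=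
  ContinuousOn u Dᶜ ∧
  ViscSubOn n k l (closure D)ᶜ u ∧
  ViscSupOn n k l (closure D)ᶜ u ∧
  ∀ x ∈ frontier D, u x = φ x

/-- A smooth, bounded, strictly convex open set. -/
structure SmoothStrictlyConvexDomain (n : ℕ) (D : Set (En n)) : Prop where
  isOpen : IsOpen D
  nonempty : D.Nonempty
  bounded : Bornology.IsBounded D
  strictConvex : StrictConvex ℝ D
  smoothBoundary : ∃ f : En n → ℝ, ContDiff ℝ (⊤ : ℕ∞) f ∧ D = {x | f x < 0} ∧
    ∀ x ∈ frontier D, fderiv ℝ f x ≠ 0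

/-- `½ xᵀ A x`. -/
def quadForm {n : ℕ} (A : Matrix (Fin n) (Fin n) ℝ) (x : En n) : ℝ :=
  (1 / 2) * ∑ i, ∑ j, A i j * x i * x j

/-- `s(x) = ½ ∑ a_i x_i²` (i.e. `½ xᵀAx` for `A = diag a`). -/
def sdiag {n : ℕ} (a : Fin n → ℝ) (x : En n) : ℝ :=
  (1 / 2) * ∑ i, a i * x i ^ 2

end

/-!
With `x = a_i` and `b` the remaining entries, `σ_k(a) = σ_k(b) + x σ_{k-1}(b)` and
`σ_{k-1;i}(a) a_i = x σ_{k-1}(b) = σ_k(a) - σ_{k;i}(a)`. Moving from `i` to `j > i` replaces the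
entry `a_j` of `b` by the smaller `a_i`, so `σ_{k;i}(a)` decreases and `σ_{k-1;i}(a) a_i` increases
in `i`. In `k`, the quotient `x σ_{k-1}(b) / (σ_k(b) + x σ_{k-1}(b))` increases because
`σ_k(b) / σ_{k-1}(b)` decreases: this is Newton's log-concavity of the elementary symmetric
polynomials of nonnegative numbers, proved by induction on the number of entries.
-/

namespace Multiset

section CommSemiring

variable {R : Type*} [CommSemiring R]

theorem esymm_zero_right (s : Multiset R) : s.esymm 0 = 1 := by
  simp [esymm, powersetCard_zero_left]

theorem esymm_cons_succ (x : R) (s : Multiset R) (k : ℕ) :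
    (x ::ₘ s).esymm (k + 1) = s.esymm (k + 1) + x * s.esymm k := by
  simp [esymm, powersetCard_cons, map_map, prod_cons, sum_map_mul_left]

theorem esymm_zero_cons (s : Multiset R) (k : ℕ) : (0 ::ₘ s).esymm k = s.esymm k := by
  cases k with
  | zero => simp only [esymm_zero_right]
  | succ k => rw [esymm_cons_succ, zero_mul, add_zero]

end CommSemiring

section OrderedRing

variable {R : Type*} [CommRing R] [LinearOrder R] [IsStrictOrderedRing R] {s : Multiset R}

theorem esymm_nonneg (hs : ∀ x ∈ s, 0 ≤ x) (k : ℕ) : 0 ≤ s.esymm k :=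
  sum_nonneg fun _ ht => by
    obtain ⟨u, hu, rfl⟩ := mem_map.1 ht
    exact prod_nonneg fun x hx => hs x (mem_of_le (mem_powersetCard.1 hu).1 hx)

theorem esymm_pos (hs : ∀ x ∈ s, 0 < x) {k : ℕ} (hk : k ≤ card s) : 0 < s.esymm k := by
  induction s using Multiset.induction_on generalizing k with
  | empty => simp_all [esymm_zero_right]
  | cons x s ih =>
    cases k with
    | zero => simp [esymm_zero_right]
    | succ k =>
      rw [esymm_cons_succ]
      have hs' : ∀ y ∈ s, 0 < y := fun y hy => hs y (mem_cons_of_mem hy)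
      have := mul_pos (hs x (mem_cons_self x s)) (ih hs' (by simpa using hk))
      linarith [esymm_nonneg (fun y hy => (hs' y hy).le) (k + 1)]

theorem esymm_cons_le_esymm_cons (hs : ∀ x ∈ s, 0 ≤ x) {x y : R} (hxy : x ≤ y) (k : ℕ) :
    (x ::ₘ s).esymm k ≤ (y ::ₘ s).esymm k := by
  cases k with
  | zero => simp only [esymm_zero_right, le_refl]
  | succ k =>
    rw [esymm_cons_succ, esymm_cons_succ]
    gcongr
    exact esymm_nonneg hs k

theorem esymm_mul_esymm_succ_le (hs : ∀ x ∈ s, 0 ≤ x) {p q : ℕ} (hpq : p ≤ q) :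
    s.esymm p * s.esymm (q + 1) ≤ s.esymm (p + 1) * s.esymm q := by
  induction s using Multiset.induction_on generalizing p q with
  | empty =>
    have h0 : (0 : Multiset R).esymm (q + 1) = 0 := by
      simp [esymm, powersetCard_zero_right]
    rw [h0, mul_zero]
    exact mul_nonneg (esymm_nonneg hs _) (esymm_nonneg hs _)
  | cons x s ih =>
    have hx : 0 ≤ x := hs x (mem_cons_self x s)
    replace ih := @ih fun y hy => hs y (mem_cons_of_mem hy)
    have he := esymm_nonneg (fun y hy => hs y (mem_cons_of_mem hy))
    rcases q with _ | q
    · rw [Nat.le_zero.1 hpq, mul_comm]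
    rcases p with _ | p
    · have h := ih (p := 0) (q := q + 1) (Nat.zero_le _)
      simp only [esymm_zero_right, esymm_cons_succ, one_mul, mul_one, zero_add] at h ⊢
      nlinarith [mul_nonneg hx (mul_nonneg (he 1) (he q)), mul_nonneg (mul_nonneg hx hx) (he q)]
    · have hp : p ≤ q := Nat.le_of_succ_le_succ hpq
      have h3 : s.esymm p * s.esymm (q + 2) ≤ s.esymm (p + 2) * s.esymm q := by
        rcases hp.eq_or_lt with rfl | hlt
        · rw [mul_comm]
        · exact (ih (Nat.le_succ_of_le hp)).trans (ih (q := q) hlt)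
      simp only [esymm_cons_succ]
      nlinarith [ih (Nat.succ_le_succ hp), mul_le_mul_of_nonneg_left h3 hx,
        mul_le_mul_of_nonneg_left (ih hp) (mul_nonneg hx hx)]

end OrderedRing

end Multiset

theorem Monotone.ciSup_eq_of_isTop {ι α : Type*} [Preorder ι] [ConditionallyCompleteLattice α]
    {f : ι → α} (hf : Monotone f) {j : ι} (hj : IsTop j) : ⨆ i, f i = f j :=
  haveI : Nonempty ι := ⟨j⟩
  le_antisymm (ciSup_le fun i => hf (hj i))
    (le_ciSup ⟨f j, Set.forall_mem_range.2 fun i => hf (hj i)⟩ j)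

theorem Monotone.ciInf_eq_of_isBot {ι α : Type*} [Preorder ι] [ConditionallyCompleteLattice α]
    {f : ι → α} (hf : Monotone f) {j : ι} (hj : IsBot j) : ⨅ i, f i = f j :=
  hf.dual.ciSup_eq_of_isTop hj

theorem Finset.val_eq_cons_erase {ι : Type*} [DecidableEq ι] {s : Finset ι} {i : ι}
    (hi : i ∈ s) : s.val = i ::ₘ (s.erase i).val := by
  rw [Finset.erase_val, Multiset.cons_erase hi]

section ElementarySymmetric

open Finset

variable {n : ℕ}

theorem esym_eq_esymm (k : ℕ) (a : Fin n → ℝ) :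
    esym n k a = (Finset.univ.val.map a).esymm k :=
  (esymm_map_val a univ k).symm

theorem esymDel_eq_esymm (k : ℕ) (a : Fin n → ℝ) (i : Fin n) :
    esymDel n k a i = ((Finset.univ.erase i).val.map a).esymm k := by
  rw [esymDel, esym_eq_esymm, val_eq_cons_erase (mem_univ i), Multiset.map_cons,
    Function.update_self, Multiset.esymm_zero_cons,
    Multiset.map_congr rfl fun j hj => Function.update_of_ne (Finset.ne_of_mem_erase hj) 0 a]

theorem esym_succ_eq_add_mul_esymDel (k : ℕ) (a : Fin n → ℝ) (i : Fin n) :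
    esym n (k + 1) a =
      ((Finset.univ.erase i).val.map a).esymm (k + 1) + a i * esymDel n k a i := by
  rw [esym_eq_esymm, val_eq_cons_erase (mem_univ i), Multiset.map_cons,
    Multiset.esymm_cons_succ, esymDel_eq_esymm]

theorem esym_pos {a : Fin n → ℝ} (ha : ∀ i, 0 < a i) {k : ℕ} (hk : k ≤ n) :
    0 < esym n k a := by
  rw [esym_eq_esymm]
  exact Multiset.esymm_pos (by simpa using ha) (by simpa using hk)

theorem antitone_esymm_erase {a : Fin n → ℝ} (ha : ∀ i, 0 ≤ a i) (hmono : Monotone a)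
    (k : ℕ) : Antitone fun i => ((Finset.univ.erase i).val.map a).esymm k := by
  intro i j hij
  rcases eq_or_ne i j with rfl | hne
  · rfl
  have hrest : ∀ x ∈ ((Finset.univ.erase i).erase j).val.map a, 0 ≤ x :=
    fun x hx => by
      obtain ⟨l, -, rfl⟩ := Multiset.mem_map.1 hx
      exact ha l
  simp only
  rw [val_eq_cons_erase (mem_erase.2 ⟨hne, mem_univ i⟩), erase_right_comm,
    val_eq_cons_erase (mem_erase.2 ⟨hne.symm, mem_univ j⟩), Multiset.map_cons,
    Multiset.map_cons]
  exact Multiset.esymm_cons_le_esymm_cons hrest (hmono hij) k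

theorem monotone_esymDel_mul {a : Fin n → ℝ} (ha : ∀ i, 0 ≤ a i) (hmono : Monotone a)
    (k : ℕ) : Monotone fun i => esymDel n k a i * a i := by
  intro i j hij
  have hi := esym_succ_eq_add_mul_esymDel k a i
  have hj := esym_succ_eq_add_mul_esymDel k a j
  have := antitone_esymm_erase ha hmono (k + 1) hij
  simp only at this ⊢
  linarith

theorem esymDel_mul_div_esym_le_of_le {a : Fin n → ℝ} (ha : ∀ i, 0 < a i) (i : Fin n)
    {p q : ℕ} (hpq : p ≤ q) (hq : q + 1 ≤ n) :
    esymDel n p a i * a i / esym n (p + 1) a ≤ esymDel n q a i * a i / esym n (q + 1) a := by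
  have hs : ∀ x ∈ (Finset.univ.erase i).val.map a, 0 ≤ x := fun x hx => by
    obtain ⟨j, -, rfl⟩ := Multiset.mem_map.1 hx
    exact (ha j).le
  have newton := Multiset.esymm_mul_esymm_succ_le hs hpq
  rw [div_le_div_iff₀ (esym_pos ha (by omega)) (esym_pos ha hq),
    esym_succ_eq_add_mul_esymDel p a i, esym_succ_eq_add_mul_esymDel q a i,
    esymDel_eq_esymm, esymDel_eq_esymm]
  nlinarith [mul_le_mul_of_nonneg_left newton (ha i).le]

end ElementarySymmetric

/-- Equation (5.2)/(A.2): for `0 < a₁ ≤ ⋯ ≤ aₙ`, the max in `H_k` is attained at the last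
index, the min at the first, and `H_m ≤ H_k` for `m ≤ k`. -/
theorem Hk_attained_at_extremes
    (n : ℕ) (hn : 1 ≤ n) (a : Fin n → ℝ)
    (ha0 : 0 < a ⟨0, by omega⟩) (hmono : Monotone a) :
    ∀ k : ℕ, 1 ≤ k → k ≤ n →
      (⨆ i : Fin n, esymDel n (k - 1) a i * a i) =
        esymDel n (k - 1) a ⟨n - 1, by omega⟩ * a ⟨n - 1, by omega⟩ ∧
      (⨅ i : Fin n, esymDel n (k - 1) a i * a i) =
        esymDel n (k - 1) a ⟨0, by omega⟩ * a ⟨0, by omega⟩ ∧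
      Hfun n k a =
        esymDel n (k - 1) a ⟨n - 1, by omega⟩ * a ⟨n - 1, by omega⟩ / esym n k a ∧
      hfun n k a =
        esymDel n (k - 1) a ⟨0, by omega⟩ * a ⟨0, by omega⟩ / esym n k a ∧
      ∀ m : ℕ, 1 ≤ m → m ≤ k →
        esymDel n (m - 1) a ⟨n - 1, by omega⟩ * a ⟨n - 1, by omega⟩ / esym n m a ≤
          esymDel n (k - 1) a ⟨n - 1, by omega⟩ * a ⟨n - 1, by omega⟩ / esym n k a := by
  have hfirst : IsBot (⟨0, by omega⟩ : Fin n) := fun i => Fin.le_def.2 (Nat.zero_le _)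
  have hlast : IsTop (⟨n - 1, by omega⟩ : Fin n) := fun i => Fin.le_def.2 (by simp; omega)
  have hpos : ∀ i, 0 < a i := fun i => ha0.trans_le (hmono (hfirst i))
  intro k hk1 hkn
  obtain ⟨k, rfl⟩ := Nat.exists_eq_add_of_le' hk1
  have hf := monotone_esymDel_mul (fun i => (hpos i).le) hmono k
  have hg := hf.div_const (esym_pos hpos hkn).le
  simp only [Nat.add_sub_cancel]
  refine ⟨hf.ciSup_eq_of_isTop hlast, hf.ciInf_eq_of_isBot hfirst, hg.ciSup_eq_of_isTop hlast,
    ?_, ?_⟩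
  · rw [hfun, if_neg k.succ_ne_zero]
    exact hg.ciInf_eq_of_isBot hfirst
  · intro m hm1 hmk
    obtain ⟨m, rfl⟩ := Nat.exists_eq_add_of_le' hm1
    exact esymDel_mul_div_esym_le_of_le hpos _ (by omega) hkn
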